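/- In dimensionless variables, for 0 < ε² + w̄/m̃² ≤ 1 with r̃₊/m̃ = 1 + √(1 - ε² - w̄/m̃²), the ratio m̃_H/m̃ = (r̃₊/m̃)²/[(r̃₊/m̃)² + w̄/m̃²]² · {(r̃₊/m̃)² - w̄/m̃² - (r̃₊/m̃)ε²} satisfies m̃_H/m̃ ≤ 1, with equality if and only if w̄ = 0 and ε = 0; moreover m̃_H = 0 at the extremal configuration ε² + w̄/m̃² = 1. -/

import Mathlib

/-!
Writing `w = w̄/m̃²` and `e = ε²`, the defect of the ratio from `1` is
`((x² + w)² - x²(x² - w - x e)) / (x² + w)² = (x³ e + 3 w x² + w²) / (x² + w)²`,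
a sum of nonnegative terms since `x ≥ 1`; it vanishes exactly when `w = e = 0`.
At the extremal configuration the square root vanishes, so `x = 1` and the numerator is
`1 - w - e = 0`.
-/

namespace Komar

/-- The ratio `m̃_H / m̃` as a function of `x = r̃₊/m̃`, `w = w̄/m̃²` and `e = ε²`. -/
noncomputable def massRatio (x w e : ℝ) : ℝ :=
  x ^ 2 * (x ^ 2 - w - x * e) / (x ^ 2 + w) ^ 2

theorem one_sub_massRatio {x w : ℝ} (e : ℝ) (h : x ^ 2 + w ≠ 0) :
    1 - massRatio x w e = (x ^ 3 * e + 3 * w * x ^ 2 + w ^ 2) / (x ^ 2 + w) ^ 2 := by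
  unfold massRatio
  field_simp
  ring

theorem massRatio_le_one {x w e : ℝ} (hx : 0 < x) (hw : 0 ≤ w) (he : 0 ≤ e) :
    massRatio x w e ≤ 1 := by
  have hdefect : 0 ≤ 1 - massRatio x w e := by
    rw [one_sub_massRatio e (by positivity)]
    positivity
  linarith

theorem massRatio_eq_one_iff {x w e : ℝ} (hx : 0 < x) (hw : 0 ≤ w) (he : 0 ≤ e) :
    massRatio x w e = 1 ↔ w = 0 ∧ e = 0 := by
  have h₁ : 0 ≤ x ^ 3 * e := by positivity
  have h₂ : 0 ≤ 3 * w * x ^ 2 := by positivity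
  have hden : (x ^ 2 + w) ^ 2 ≠ 0 := by positivity
  rw [eq_comm, ← sub_eq_zero, one_sub_massRatio e (by positivity), div_eq_zero_iff,
    or_iff_left hden, add_eq_zero_iff_of_nonneg (add_nonneg h₁ h₂) (sq_nonneg w),
    add_eq_zero_iff_of_nonneg h₁ h₂]
  simp only [mul_eq_zero, pow_eq_zero_iff, ne_eq, OfNat.ofNat_ne_zero, not_false_eq_true,
    hx.ne', false_or]
  tauto

theorem massRatio_one_eq_zero {w e : ℝ} (h : e + w = 1) : massRatio 1 w e = 0 := by
  unfold massRatio
  rw [show (1 : ℝ) ^ 2 - w - 1 * e = 0 by linarith, mul_zero, zero_div]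

end Komar

open Komar in
theorem komar_mass_ratio_antiscreening_general (m wbar ε : ℝ) (hm : 0 < m) (hw : 0 ≤ wbar)
    (x ratio : ℝ)
    (hx : x = 1 + Real.sqrt (1 - ε ^ 2 - wbar / m ^ 2))
    (hratio : ratio =
      x ^ 2 * (x ^ 2 - wbar / m ^ 2 - x * ε ^ 2) / (x ^ 2 + wbar / m ^ 2) ^ 2) :
    ratio ≤ 1 ∧ (ratio = 1 ↔ wbar = 0 ∧ ε = 0) ∧
    (ε ^ 2 + wbar / m ^ 2 = 1 → ratio = 0) := by
  replace hratio : ratio = massRatio x (wbar / m ^ 2) (ε ^ 2) := hratio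
  have hm2 : m ^ 2 ≠ 0 := by positivity
  have hx_pos : 0 < x := by rw [hx]; positivity
  have hw' : 0 ≤ wbar / m ^ 2 := by positivity
  subst hratio
  refine ⟨massRatio_le_one hx_pos hw' (sq_nonneg ε), ?_, fun hext => ?_⟩
  · rw [massRatio_eq_one_iff hx_pos hw' (sq_nonneg ε), div_eq_zero_iff, or_iff_left hm2,
      sq_eq_zero_iff]
  · have hx_one : x = 1 := by
      rw [hx, show 1 - ε ^ 2 - wbar / m ^ 2 = 0 by linarith, Real.sqrt_zero, add_zero]
    rw [hx_one]
    exact massRatio_one_eq_zero hext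

theorem komar_mass_ratio_antiscreening (m wbar ε : ℝ) (hm : 0 < m) (hw : 0 ≤ wbar)
    (hle : ε ^ 2 + wbar / m ^ 2 ≤ 1)
    (x ratio : ℝ)
    (hx : x = 1 + Real.sqrt (1 - ε ^ 2 - wbar / m ^ 2))
    (hratio : ratio =
      x ^ 2 * (x ^ 2 - wbar / m ^ 2 - x * ε ^ 2) / (x ^ 2 + wbar / m ^ 2) ^ 2) :
    ratio ≤ 1 ∧ (ratio = 1 ↔ wbar = 0 ∧ ε = 0) ∧
    (ε ^ 2 + wbar / m ^ 2 = 1 → ratio = 0) :=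
  komar_mass_ratio_antiscreening_general m wbar ε hm hw x ratio hx hratio
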